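/- Let q be a prime power, d ≥ 1 an integer, χ a nontrivial additive character of 𝔽_q, A, B ⊆ 𝔽_q^d, and α ∈ 𝔽_q with α ≠ 0. Then |∑_{x ∈ B} S_{A,α}(x)|^2 ≤ |B| · q^d · |∑_{s, s' ∈ 𝔽_q^*} ∑_{y, y' ∈ A, s y = s' y'} χ(α(s' − s))|, where S_{A,α}(x) = ∑_{s ∈ 𝔽_q^*} ∑_{y ∈ A} χ(s(x·y − α)) and the inner sum in the right-hand side is over all pairs (y, y') ∈ A × A with s y = s' y' in 𝔽_q^d. -/

import Mathlib

/-!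
Write `S(x) = ∑_{(s, y) ∈ 𝔽_q^* × A} χ(-sα) χ(x · sy)`, a linear combination of the characters
`x ↦ χ(x · v)`. By orthogonality of these characters, `∑_{x ∈ 𝔽_q^d} |S(x)|²` is `q^d` times the sum
of `χ(-sα) conj χ(-s'α) = χ(α(s' - s))` over the pairs with `sy = s'y'`. The bound follows by
Cauchy–Schwarz over `B` and extending the sum of `|S(x)|²` from `B` to all of `𝔽_q^d`.
-/

/-- The dot product on `𝔽_q^d`. -/
def dotp {F : Type} [Field F] {d : ℕ} (x y : Fin d → F) : F := ∑ i, x i * y i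

open Finset Matrix
open scoped ComplexConjugate

lemma AddChar.map_sum_eq_prod {A M ι : Type*} [AddCommMonoid A] [CommMonoid M] (ψ : AddChar A M)
    (s : Finset ι) (f : ι → A) : ψ (∑ i ∈ s, f i) = ∏ i ∈ s, ψ (f i) :=
  map_prod ψ.toMonoidHom (fun i => Multiplicative.ofAdd (f i)) s

theorem AddChar.sum_apply_dotProduct {F R ι : Type*} [CommRing F] [Fintype F] [DecidableEq F]
    [CommRing R] [IsDomain R] [Fintype ι] [DecidableEq ι] {χ : AddChar F R} (hχ : χ.IsPrimitive)
    (v : ι → F) :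
    ∑ x : ι → F, χ (x ⬝ᵥ v) = if v = 0 then (Fintype.card F : R) ^ Fintype.card ι else 0 := by
  simp_rw [dotProduct, χ.map_sum_eq_prod]
  rw [← Fintype.prod_sum fun i t => χ (t * v i)]
  simp_rw [AddChar.sum_mulShift _ hχ, apply_ite (Nat.cast : ℕ → R), Nat.cast_zero]
  rw [Fintype.prod_ite_zero]
  simp [funext_iff]

section Parseval

variable {F K ι κ : Type*} [CommRing F] [Fintype F] [DecidableEq F] [RCLike K]
  [Fintype ι] [DecidableEq ι] {χ : AddChar F K}

theorem sum_mul_conj_sum_addChar_dotProduct (hχ : χ.IsPrimitive) (I : Finset κ) (c : κ → K)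
    (v : κ → ι → F) :
    ∑ x : ι → F, (∑ i ∈ I, c i * χ (x ⬝ᵥ v i)) * conj (∑ i ∈ I, c i * χ (x ⬝ᵥ v i)) =
      (Fintype.card F : K) ^ Fintype.card ι *
        ∑ i ∈ I, ∑ j ∈ I, if v i = v j then c i * conj (c j) else 0 := by
  have hterm : ∀ x i j, c i * χ (x ⬝ᵥ v i) * conj (c j * χ (x ⬝ᵥ v j)) =
      c i * conj (c j) * χ (x ⬝ᵥ (v i - v j)) := fun x i j => by
    rw [map_mul, ← AddChar.map_neg_eq_conj, dotProduct_sub, sub_eq_add_neg,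
      AddChar.map_add_eq_mul]
    ring
  simp_rw [map_sum, sum_mul_sum, hterm]
  rw [sum_comm, mul_sum]
  refine sum_congr rfl fun i _ => ?_
  rw [sum_comm, mul_sum]
  refine sum_congr rfl fun j _ => ?_
  rw [← mul_sum, AddChar.sum_apply_dotProduct hχ]
  simp only [sub_eq_zero]
  split_ifs <;> ring

theorem sum_norm_sq_sum_addChar_dotProduct (hχ : χ.IsPrimitive) (I : Finset κ) (c : κ → K)
    (v : κ → ι → F) :
    ∑ x : ι → F, ‖∑ i ∈ I, c i * χ (x ⬝ᵥ v i)‖ ^ 2 =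
      Fintype.card F ^ Fintype.card ι *
        ‖∑ i ∈ I, ∑ j ∈ I, if v i = v j then c i * conj (c j) else 0‖ := by
  have h := congrArg norm (sum_mul_conj_sum_addChar_dotProduct hχ I c v)
  simp_rw [RCLike.mul_conj, ← RCLike.ofReal_pow, ← RCLike.ofReal_sum, RCLike.norm_ofReal,
    norm_mul, norm_pow, RCLike.norm_natCast] at h
  rwa [abs_of_nonneg (by positivity)] at h

end Parseval

theorem sq_norm_sum_le_card_mul_sum_sq_norm {α E : Type*} [Fintype α] [SeminormedAddCommGroup E]
    (B : Finset α) (f : α → E) : ‖∑ x ∈ B, f x‖ ^ 2 ≤ #B * ∑ x, ‖f x‖ ^ 2 :=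
  calc ‖∑ x ∈ B, f x‖ ^ 2
      ≤ (∑ x ∈ B, ‖f x‖) ^ 2 := by gcongr; exact norm_sum_le _ _
    _ ≤ #B * ∑ x ∈ B, ‖f x‖ ^ 2 := sq_sum_le_card_mul_sum_sq
    _ ≤ #B * ∑ x, ‖f x‖ ^ 2 := by
        gcongr
        exact subset_univ B

lemma AddChar.apply_mul_dotp_sub {F M : Type} [Field F] [CommMonoid M] {d : ℕ} (χ : AddChar F M)
    (s α : F) (x y : Fin d → F) :
    χ (s * (dotp x y - α)) = χ (-(s * α)) * χ (x ⬝ᵥ s • y) := by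
  rw [← AddChar.map_add_eq_mul, dotProduct_smul, smul_eq_mul]
  congr 1
  simp only [dotp, dotProduct]
  ring

lemma AddChar.apply_neg_mul_mul_conj_apply_neg_mul {F K : Type*} [Field F] [Finite F] [RCLike K]
    (χ : AddChar F K) (s s' α : F) :
    χ (-(s * α)) * conj (χ (-(s' * α))) = χ (α * (s' - s)) := by
  rw [← AddChar.map_neg_eq_conj, neg_neg, ← AddChar.map_add_eq_mul]
  ring_nf

theorem stmt17_general (F : Type) [Field F] [Fintype F] [DecidableEq F] (d : ℕ)
    (χ : AddChar F ℂ) (hχ : χ ≠ 1) (A B : Finset (Fin d → F)) (α : F) :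
    (‖∑ x ∈ B, ∑ s ∈ Finset.univ.erase (0 : F), ∑ y ∈ A,
        χ (s * (dotp x y - α))‖) ^ 2 ≤
      (B.card : ℝ) * (Fintype.card F : ℝ) ^ d *
        ‖∑ s ∈ Finset.univ.erase (0 : F), ∑ s' ∈ Finset.univ.erase (0 : F),
          ∑ y ∈ A, ∑ y' ∈ A,
            if s • y = s' • y' then χ (α * (s' - s)) else 0‖ := by
  set E := (univ : Finset F).erase 0
  have hS : ∀ x, ∑ s ∈ E, ∑ y ∈ A, χ (s * (dotp x y - α)) =
      ∑ p ∈ E ×ˢ A, χ (-(p.1 * α)) * χ (x ⬝ᵥ p.1 • p.2) := fun x => by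
    simp_rw [sum_product, χ.apply_mul_dotp_sub]
  have hT : (∑ s ∈ E, ∑ s' ∈ E, ∑ y ∈ A, ∑ y' ∈ A,
        if s • y = s' • y' then χ (α * (s' - s)) else 0) =
      ∑ p ∈ E ×ˢ A, ∑ p' ∈ E ×ˢ A,
        if p.1 • p.2 = p'.1 • p'.2 then χ (-(p.1 * α)) * conj (χ (-(p'.1 * α))) else 0 := by
    simp_rw [sum_product, χ.apply_neg_mul_mul_conj_apply_neg_mul]
    exact sum_congr rfl fun s _ => sum_comm
  simp_rw [hS, hT]
  calc _ ≤ #B * ∑ x, ‖∑ p ∈ E ×ˢ A, χ (-(p.1 * α)) * χ (x ⬝ᵥ p.1 • p.2)‖ ^ 2 :=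
        sq_norm_sum_le_card_mul_sum_sq_norm B _
    _ = _ := by
        rw [sum_norm_sq_sum_addChar_dotProduct (AddChar.IsPrimitive.of_ne_one hχ),
          Fintype.card_fin, mul_assoc]

/-- For `A, B ⊆ 𝔽_q^d` and `α ≠ 0`,
`|∑_{x ∈ B} S_{A,α}(x)|^2 ≤ |B| q^d |∑_{s,s' ∈ 𝔽_q^*} ∑_{y,y' ∈ A, sy = s'y'} χ(α(s' − s))|`,
where `S_{A,α}(x) = ∑_{s ∈ 𝔽_q^*} ∑_{y ∈ A} χ(s(x·y − α))`. -/
theorem stmt17 (F : Type) [Field F] [Fintype F] [DecidableEq F] (d : ℕ) (hd : 1 ≤ d)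
    (χ : AddChar F ℂ) (hχ : χ ≠ 1) (A B : Finset (Fin d → F)) (α : F) (hα : α ≠ 0) :
    (‖∑ x ∈ B, ∑ s ∈ Finset.univ.erase (0 : F), ∑ y ∈ A,
        χ (s * (dotp x y - α))‖) ^ 2 ≤
      (B.card : ℝ) * (Fintype.card F : ℝ) ^ d *
        ‖∑ s ∈ Finset.univ.erase (0 : F), ∑ s' ∈ Finset.univ.erase (0 : F),
          ∑ y ∈ A, ∑ y' ∈ A,
            if s • y = s' • y' then χ (α * (s' - s)) else 0‖ :=
  stmt17_general F d χ hχ A B α
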